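/- arXiv:2509.12637 — 8 statements merged into one kernel-verified Lean document; each statement's English description precedes it below -/
import Mathlib

section
/- Let n be a positive natural number and let (M_α)_{α ∈ A} be a finite family of n×n complex matrices satisfying both the trace-preserving condition Σ_α M_α† M_α = I and the unitality condition Σ_α M_α M_α† = I. Define the linear map Φ on n×n complex matrices by Φ(ρ) = Σ_α M_α ρ M_α†. Then for every n×n complex matrix ρ, ‖ρ‖_F² − ‖Φ(ρ)‖_F² = (1/2) Σ_{α,β ∈ A} ‖[ρ, M_α† M_β]‖_F², where [X,Y] = XY − YX denotes the commutator. -/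
open Matrix

/-- The Frobenius (Hilbert–Schmidt) norm `‖A‖_F = √(Tr(A†A))`. -/
noncomputable def frobNorm {n : ℕ} (A : Matrix (Fin n) (Fin n) ℂ) : ℝ :=
  Real.sqrt ((Aᴴ * A).trace).re

lemma frob_sq {n : ℕ} (A : Matrix (Fin n) (Fin n) ℂ) :
    frobNorm A ^ 2 = ((Aᴴ * A).trace).re := by
  unfold frobNorm
  rw [Real.sq_sqrt]
  simp only [Matrix.trace, Matrix.diag, Matrix.mul_apply, Matrix.conjTranspose_apply,
    Complex.re_sum]
  refine Finset.sum_nonneg fun i _ => Finset.sum_nonneg fun j _ => ?_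
  rw [Complex.star_def, ← Complex.normSq_eq_conj_mul_self]
  simp [Complex.normSq_nonneg]

theorem stmt_0 (n : ℕ) (hn : 0 < n) (k : ℕ)
    (M : Fin k → Matrix (Fin n) (Fin n) ℂ)
    (htp : ∑ α, (M α)ᴴ * M α = 1)
    (hunital : ∑ α, M α * (M α)ᴴ = 1)
    (Φ : Matrix (Fin n) (Fin n) ℂ → Matrix (Fin n) (Fin n) ℂ)
    (hΦ : ∀ ρ, Φ ρ = ∑ α, M α * ρ * (M α)ᴴ)
    (ρ : Matrix (Fin n) (Fin n) ℂ) :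
    frobNorm ρ ^ 2 - frobNorm (Φ ρ) ^ 2 =
      (1 / 2) * ∑ α, ∑ β,
        frobNorm (ρ * ((M α)ᴴ * M β) - ((M α)ᴴ * M β) * ρ) ^ 2 := by
  have L1 : ∀ X : Matrix (Fin n) (Fin n) ℂ,
      ∑ β, ((M β)ᴴ * X * M β).trace = X.trace := by
    intro X
    have h : ∀ β, ((M β)ᴴ * X * M β).trace = ((M β * (M β)ᴴ) * X).trace := by
      intro β
      rw [Matrix.trace_mul_comm, ← Matrix.mul_assoc]
    simp_rw [h]
    rw [← Matrix.trace_sum, ← Matrix.sum_mul, hunital, one_mul]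
  have L2 : ∀ X : Matrix (Fin n) (Fin n) ℂ,
      ∑ α, (M α * X * (M α)ᴴ).trace = X.trace := by
    intro X
    have h : ∀ α, (M α * X * (M α)ᴴ).trace = (((M α)ᴴ * M α) * X).trace := by
      intro α
      rw [Matrix.trace_mul_comm, ← Matrix.mul_assoc]
    simp_rw [h]
    rw [← Matrix.trace_sum, ← Matrix.sum_mul, htp, one_mul]
  have hΦH : (Φ ρ)ᴴ = ∑ α, M α * ρᴴ * (M α)ᴴ := by
    rw [hΦ]
    simp [Matrix.conjTranspose_sum, Matrix.conjTranspose_mul, Matrix.mul_assoc]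
  have expand : ∀ α β : Fin k,
      ((ρ * ((M α)ᴴ * M β) - ((M α)ᴴ * M β) * ρ)ᴴ *
        (ρ * ((M α)ᴴ * M β) - ((M α)ᴴ * M β) * ρ)).trace
      = ((M β)ᴴ * (M α * (ρᴴ * ρ) * (M α)ᴴ) * M β).trace
        - ((M α * ρᴴ * (M α)ᴴ) * (M β * ρ * (M β)ᴴ)).trace
        - ((M β * ρᴴ * (M β)ᴴ) * (M α * ρ * (M α)ᴴ)).trace
        + ((ρᴴ * (M β)ᴴ) * (M α * (M α)ᴴ) * (M β * ρ)).trace := by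
    intro α β
    have h2 : (ρᴴ * ((M β)ᴴ * (M α * (ρ * ((M α)ᴴ * M β))))).trace
        = (M β * (ρᴴ * ((M β)ᴴ * (M α * (ρ * (M α)ᴴ))))).trace := by
      have e : ρᴴ * ((M β)ᴴ * (M α * (ρ * ((M α)ᴴ * M β))))
          = (ρᴴ * ((M β)ᴴ * (M α * (ρ * (M α)ᴴ)))) * M β := by
        simp [Matrix.mul_assoc]
      rw [e, Matrix.trace_mul_comm]
    have h3 : ((M β)ᴴ * (M α * (ρᴴ * ((M α)ᴴ * (M β * ρ))))).trace
        = (M α * (ρᴴ * ((M α)ᴴ * (M β * (ρ * (M β)ᴴ))))).trace := by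
      rw [Matrix.trace_mul_comm]
      congr 1
      simp [Matrix.mul_assoc]
    simp only [Matrix.conjTranspose_sub, Matrix.conjTranspose_mul,
      Matrix.conjTranspose_conjTranspose, Matrix.sub_mul, Matrix.mul_sub,
      Matrix.trace_sub, Matrix.mul_assoc]
    rw [h2, h3]
    ring
  have hS : (∑ α, ∑ β,
      ((ρ * ((M α)ᴴ * M β) - ((M α)ᴴ * M β) * ρ)ᴴ *
        (ρ * ((M α)ᴴ * M β) - ((M α)ᴴ * M β) * ρ)).trace)
      = 2 * (ρᴴ * ρ).trace - 2 * ((Φ ρ)ᴴ * (Φ ρ)).trace := by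
    have c1 : ∑ α, ∑ β, ((M β)ᴴ * (M α * (ρᴴ * ρ) * (M α)ᴴ) * M β).trace
        = (ρᴴ * ρ).trace := by
      calc ∑ α, ∑ β, ((M β)ᴴ * (M α * (ρᴴ * ρ) * (M α)ᴴ) * M β).trace
          = ∑ α, (M α * (ρᴴ * ρ) * (M α)ᴴ).trace :=
            Finset.sum_congr rfl fun α _ => L1 _
        _ = (ρᴴ * ρ).trace := L2 _
    have c2 : ∑ α, ∑ β, ((M α * ρᴴ * (M α)ᴴ) * (M β * ρ * (M β)ᴴ)).trace
        = ((Φ ρ)ᴴ * (Φ ρ)).trace := by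
      rw [hΦH, hΦ, Matrix.sum_mul, Matrix.trace_sum]
      refine Finset.sum_congr rfl fun α _ => ?_
      rw [Matrix.mul_sum, Matrix.trace_sum]
    have c3 : ∑ α, ∑ β, ((M β * ρᴴ * (M β)ᴴ) * (M α * ρ * (M α)ᴴ)).trace
        = ((Φ ρ)ᴴ * (Φ ρ)).trace := by
      calc ∑ α, ∑ β, ((M β * ρᴴ * (M β)ᴴ) * (M α * ρ * (M α)ᴴ)).trace
          = ∑ α, ∑ β, ((M α * ρ * (M α)ᴴ) * (M β * ρᴴ * (M β)ᴴ)).trace :=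
            Finset.sum_congr rfl fun α _ => Finset.sum_congr rfl fun β _ =>
              Matrix.trace_mul_comm _ _
        _ = ((Φ ρ) * (Φ ρ)ᴴ).trace := by
            rw [hΦH, hΦ, Matrix.sum_mul, Matrix.trace_sum]
            refine Finset.sum_congr rfl fun α _ => ?_
            rw [Matrix.mul_sum, Matrix.trace_sum]
        _ = ((Φ ρ)ᴴ * (Φ ρ)).trace := Matrix.trace_mul_comm _ _
    have c4 : ∑ α, ∑ β, ((ρᴴ * (M β)ᴴ) * (M α * (M α)ᴴ) * (M β * ρ)).trace
        = (ρᴴ * ρ).trace := by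
      rw [Finset.sum_comm]
      have inner : ∀ β, ∑ α, ((ρᴴ * (M β)ᴴ) * (M α * (M α)ᴴ) * (M β * ρ)).trace
          = (M β * (ρ * ρᴴ) * (M β)ᴴ).trace := by
        intro β
        have e : ∑ α, ((ρᴴ * (M β)ᴴ) * (M α * (M α)ᴴ) * (M β * ρ))
            = (ρᴴ * (M β)ᴴ) * (M β * ρ) := by
          rw [← Matrix.sum_mul, ← Matrix.mul_sum, hunital, mul_one]
        rw [← Matrix.trace_sum, e, Matrix.trace_mul_comm]
        congr 1
        simp [Matrix.mul_assoc]
      simp_rw [inner]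
      rw [L2, Matrix.trace_mul_comm]
    calc (∑ α, ∑ β, ((ρ * ((M α)ᴴ * M β) - ((M α)ᴴ * M β) * ρ)ᴴ *
          (ρ * ((M α)ᴴ * M β) - ((M α)ᴴ * M β) * ρ)).trace)
        = ∑ α, ∑ β, (((M β)ᴴ * (M α * (ρᴴ * ρ) * (M α)ᴴ) * M β).trace
            - ((M α * ρᴴ * (M α)ᴴ) * (M β * ρ * (M β)ᴴ)).trace
            - ((M β * ρᴴ * (M β)ᴴ) * (M α * ρ * (M α)ᴴ)).trace
            + ((ρᴴ * (M β)ᴴ) * (M α * (M α)ᴴ) * (M β * ρ)).trace) :=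
          Finset.sum_congr rfl fun α _ => Finset.sum_congr rfl fun β _ => expand α β
      _ = 2 * (ρᴴ * ρ).trace - 2 * ((Φ ρ)ᴴ * (Φ ρ)).trace := by
          simp only [Finset.sum_add_distrib, Finset.sum_sub_distrib]
          rw [c1, c2, c3, c4]
          ring
  simp only [frob_sq]
  have hre : ∑ α, ∑ β,
      (((ρ * ((M α)ᴴ * M β) - ((M α)ᴴ * M β) * ρ)ᴴ *
        (ρ * ((M α)ᴴ * M β) - ((M α)ᴴ * M β) * ρ)).trace).re
      = ((2 : ℂ) * (ρᴴ * ρ).trace - 2 * ((Φ ρ)ᴴ * (Φ ρ)).trace).re := by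
    rw [← hS]
    simp [Complex.re_sum]
  rw [hre]
  simp only [Complex.sub_re, Complex.mul_re, Complex.re_ofNat, Complex.im_ofNat]
  ring
end

section
/- Let n be a positive natural number and let (M_α)_{α ∈ A} be a finite family of n×n complex matrices satisfying Σ_α M_α† M_α = I and Σ_α M_α M_α† = I, and define Φ(ρ) = Σ_α M_α ρ M_α†. Then for every n×n complex matrix ρ, ‖Φ(ρ)‖_F ≤ ‖ρ‖_F. -/
open Matrix

private lemma traceReNonneg {n : ℕ} (Z : Matrix (Fin n) (Fin n) ℂ) : 0 ≤ ((Zᴴ * Z).trace).re := by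
  have h : (Zᴴ * Z).trace = ∑ j, ∑ i, (starRingEnd ℂ) (Z i j) * Z i j := by
    simp [Matrix.trace, Matrix.mul_apply, Matrix.conjTranspose_apply, Matrix.diag]
  rw [h, Complex.re_sum]
  refine Finset.sum_nonneg fun j _ => ?_
  rw [Complex.re_sum]
  refine Finset.sum_nonneg fun i _ => ?_
  simp [Complex.mul_re]
  nlinarith [sq_nonneg (Z i j).re, sq_nonneg (Z i j).im]

private lemma crossBound {n : ℕ} (X Y : Matrix (Fin n) (Fin n) ℂ) :
    2 * ((Xᴴ * Y).trace).re ≤ ((Xᴴ * X).trace).re + ((Yᴴ * Y).trace).re := by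
  have h0 := traceReNonneg (X - Y)
  have hexp : (X - Y)ᴴ * (X - Y) = Xᴴ * X - Xᴴ * Y - Yᴴ * X + Yᴴ * Y := by
    rw [conjTranspose_sub, Matrix.sub_mul, Matrix.mul_sub, Matrix.mul_sub]
    abel
  have hyx : ((Yᴴ * X).trace).re = ((Xᴴ * Y).trace).re := by
    have h1 : (Yᴴ * X).trace = star (Xᴴ * Y).trace := by
      rw [← Matrix.trace_conjTranspose, conjTranspose_mul, conjTranspose_conjTranspose]
    rw [h1, Complex.star_def, Complex.conj_re]
  rw [hexp] at h0
  simp only [trace_add, trace_sub, Complex.add_re, Complex.sub_re] at h0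
  linarith

theorem stmt_1 (n : ℕ) (hn : 0 < n) (k : ℕ)
    (M : Fin k → Matrix (Fin n) (Fin n) ℂ)
    (htp : ∑ α, (M α)ᴴ * M α = 1)
    (hunital : ∑ α, M α * (M α)ᴴ = 1)
    (Φ : Matrix (Fin n) (Fin n) ℂ → Matrix (Fin n) (Fin n) ℂ)
    (hΦ : ∀ ρ, Φ ρ = ∑ α, M α * ρ * (M α)ᴴ)
    (ρ : Matrix (Fin n) (Fin n) ℂ) :
    frobNorm (Φ ρ) ≤ frobNorm ρ := by
  unfold frobNorm
  apply Real.sqrt_le_sqrt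
  rw [hΦ]
  set X : Fin k → Fin k → Matrix (Fin n) (Fin n) ℂ := fun α β => (M α)ᴴ * M β * ρ with hX
  set Y : Fin k → Fin k → Matrix (Fin n) (Fin n) ℂ := fun α β => ρ * ((M α)ᴴ * M β) with hY
  -- Expand the trace as a double sum of cross terms
  have expand : ((∑ α, M α * ρ * (M α)ᴴ)ᴴ * ∑ α, M α * ρ * (M α)ᴴ).trace
      = ∑ β, ∑ α, ((X β α)ᴴ * (Y β α)).trace := by
    rw [conjTranspose_sum]
    simp only [Matrix.sum_mul, Matrix.mul_sum, trace_sum]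
    refine Finset.sum_congr rfl fun β _ => Finset.sum_congr rfl fun α _ => ?_
    simp only [hX, hY, conjTranspose_mul, conjTranspose_conjTranspose]
    rw [show M α * (ρᴴ * (M α)ᴴ) * (M β * ρ * (M β)ᴴ)
        = M α * (ρᴴ * (M α)ᴴ * (M β * ρ * (M β)ᴴ)) by
      simp [Matrix.mul_assoc]]
    rw [Matrix.trace_mul_comm]
    congr 1
    simp [Matrix.mul_assoc]
  -- Sum of ‖X‖² collapses
  have S1 : ∑ β, ∑ α, (((X α β)ᴴ * X α β).trace) = (ρᴴ * ρ).trace := by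
    have hβ : ∀ β, ∑ α, (((X α β)ᴴ * X α β).trace) = (ρᴴ * ((M β)ᴴ * M β) * ρ).trace := by
      intro β
      rw [← trace_sum]
      congr 1
      have : ∑ α, ((X α β)ᴴ * X α β)
          = ρᴴ * (M β)ᴴ * (∑ α, M α * (M α)ᴴ) * (M β * ρ) := by
        simp only [Matrix.mul_sum, Matrix.sum_mul]
        refine Finset.sum_congr rfl fun α _ => ?_
        simp [hX, conjTranspose_mul, Matrix.mul_assoc]
      rw [this, hunital]
      simp [Matrix.mul_assoc]
    simp only [hβ]
    rw [← trace_sum]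
    congr 1
    have : ∑ β, (ρᴴ * ((M β)ᴴ * M β) * ρ) = ρᴴ * (∑ β, (M β)ᴴ * M β) * ρ := by
      simp only [Matrix.mul_sum, Matrix.sum_mul]
    rw [this, htp]
    simp
  -- Sum of ‖Y‖² collapses
  have S2 : ∑ β, ∑ α, (((Y α β)ᴴ * Y α β).trace) = (ρᴴ * ρ).trace := by
    rw [Finset.sum_comm]
    have hα : ∀ α, ∑ β, (((Y α β)ᴴ * Y α β).trace)
        = ((ρᴴ * ρ) * ((M α)ᴴ * M α)).trace := by
      intro α
      have hterm : ∀ β, ((Y α β)ᴴ * Y α β).trace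
          = ((ρᴴ * ρ) * ((M α)ᴴ * (M β * (M β)ᴴ) * M α)).trace := by
        intro β
        rw [show (Y α β)ᴴ * Y α β
            = ((M β)ᴴ * M α) * (ρᴴ * (ρ * ((M α)ᴴ * M β))) by
          simp [hY, conjTranspose_mul, Matrix.mul_assoc]]
        rw [Matrix.trace_mul_comm]
        congr 1
        simp [Matrix.mul_assoc]
      simp only [hterm]
      rw [← trace_sum]
      congr 1
      have : ∑ β, ((ρᴴ * ρ) * ((M α)ᴴ * (M β * (M β)ᴴ) * M α))
          = (ρᴴ * ρ) * ((M α)ᴴ * (∑ β, M β * (M β)ᴴ) * M α) := by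
        simp only [Matrix.mul_sum, Matrix.sum_mul]
      rw [this, hunital]
      simp [Matrix.mul_assoc]
    simp only [hα]
    rw [← trace_sum]
    congr 1
    have : ∑ α, ((ρᴴ * ρ) * ((M α)ᴴ * M α)) = (ρᴴ * ρ) * (∑ α, (M α)ᴴ * M α) := by
      simp only [Matrix.mul_sum]
    rw [this, htp]
    simp
  -- Combine
  have T1 : ∑ β, ∑ α, (((X β α)ᴴ * X β α).trace) = (ρᴴ * ρ).trace := by
    rw [Finset.sum_comm]; exact S1
  have T2 : ∑ β, ∑ α, (((Y β α)ᴴ * Y β α).trace) = (ρᴴ * ρ).trace := by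
    rw [Finset.sum_comm]; exact S2
  have hsum : ∑ β, ∑ α, (2 * (((X β α)ᴴ * Y β α).trace).re)
      ≤ ∑ β, ∑ α, ((((X β α)ᴴ * X β α).trace).re + (((Y β α)ᴴ * Y β α).trace).re) :=
    Finset.sum_le_sum fun β _ => Finset.sum_le_sum fun α _ => crossBound _ _
  have e1 := congrArg Complex.re T1
  have e2 := congrArg Complex.re T2
  simp only [Complex.re_sum] at e1 e2
  simp only [Finset.sum_add_distrib, ← Finset.mul_sum] at hsum
  rw [expand, Complex.re_sum]
  simp only [Complex.re_sum]
  linarith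
end

section
/- Let n be a positive natural number and let (M_α)_{α ∈ A} be a finite family of n×n complex matrices satisfying Σ_α M_α† M_α = I and Σ_α M_α M_α† = I, and define Φ(ρ) = Σ_α M_α ρ M_α†. Then for every n×n complex matrix ρ, ‖Φ(ρ)‖_F = ‖ρ‖_F if and only if ρ commutes with M_α† M_β for all α, β ∈ A. -/
open Matrix

private lemma trace_hermsq {n : ℕ} (X : Matrix (Fin n) (Fin n) ℂ) :
    (Xᴴ * X).trace = (∑ j, ∑ i, (Complex.normSq (X i j) : ℂ)) := by
  simp [Matrix.trace, Matrix.diag, Matrix.mul_apply, Matrix.conjTranspose_apply,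
    Complex.normSq_eq_conj_mul_self]

private lemma trace_hermsq_re {n : ℕ} (X : Matrix (Fin n) (Fin n) ℂ) :
    ((Xᴴ * X).trace).re = ∑ j, ∑ i, Complex.normSq (X i j) := by
  rw [trace_hermsq]
  simp

private lemma trace_hermsq_re_nonneg {n : ℕ} (X : Matrix (Fin n) (Fin n) ℂ) :
    0 ≤ ((Xᴴ * X).trace).re := by
  rw [trace_hermsq_re]
  exact Finset.sum_nonneg fun j _ => Finset.sum_nonneg fun i _ => Complex.normSq_nonneg _

private lemma eq_zero_of_trace_hermsq_re {n : ℕ} (X : Matrix (Fin n) (Fin n) ℂ)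
    (h : ((Xᴴ * X).trace).re = 0) : X = 0 := by
  rw [trace_hermsq_re] at h
  ext i j
  have hj := (Finset.sum_eq_zero_iff_of_nonneg
    (fun j _ => Finset.sum_nonneg fun i _ => Complex.normSq_nonneg _)).mp h j
    (Finset.mem_univ j)
  have hi := (Finset.sum_eq_zero_iff_of_nonneg
    (fun i _ => Complex.normSq_nonneg _)).mp hj i (Finset.mem_univ i)
  simpa using Complex.normSq_eq_zero.mp hi

theorem stmt_2 (n : ℕ) (hn : 0 < n) (k : ℕ)
    (M : Fin k → Matrix (Fin n) (Fin n) ℂ)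
    (htp : ∑ α, (M α)ᴴ * M α = 1)
    (hunital : ∑ α, M α * (M α)ᴴ = 1)
    (Φ : Matrix (Fin n) (Fin n) ℂ → Matrix (Fin n) (Fin n) ℂ)
    (hΦ : ∀ ρ, Φ ρ = ∑ α, M α * ρ * (M α)ᴴ)
    (ρ : Matrix (Fin n) (Fin n) ℂ) :
    frobNorm (Φ ρ) = frobNorm ρ ↔
      ∀ α β, ρ * ((M α)ᴴ * M β) = ((M α)ᴴ * M β) * ρ := by
  set A : Fin k → Fin k → Matrix (Fin n) (Fin n) ℂ := fun α β => (M α)ᴴ * M β with hA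
  set D : Fin k → Fin k → Matrix (Fin n) (Fin n) ℂ :=
    fun α β => ρ * A α β - A α β * ρ with hD
  have hΦH : (Φ ρ)ᴴ = ∑ α, M α * ρᴴ * (M α)ᴴ := by
    rw [hΦ]
    simp only [conjTranspose_sum, conjTranspose_mul, conjTranspose_conjTranspose]
    congr 1
    funext α
    noncomm_ring
  -- the four expanded terms
  have expand : ∀ α β, ((D α β)ᴴ * (D α β)).trace
      = ((A α β)ᴴ * ρᴴ * (ρ * A α β)).trace - ((A α β)ᴴ * ρᴴ * (A α β * ρ)).trace
        - (ρᴴ * (A α β)ᴴ * (ρ * A α β)).trace + (ρᴴ * (A α β)ᴴ * (A α β * ρ)).trace := by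
    intro α β
    have h1 : (D α β)ᴴ * (D α β)
        = ((A α β)ᴴ * ρᴴ * (ρ * A α β) - (A α β)ᴴ * ρᴴ * (A α β * ρ))
          - (ρᴴ * (A α β)ᴴ * (ρ * A α β) - ρᴴ * (A α β)ᴴ * (A α β * ρ)) := by
      simp only [hD, conjTranspose_sub, conjTranspose_mul]
      noncomm_ring
    rw [h1, trace_sub, trace_sub, trace_sub]
    ring
  -- Term 1
  have T1 : ∑ α, ∑ β, ((A α β)ᴴ * ρᴴ * (ρ * A α β)).trace = (ρᴴ * ρ).trace := by
    have step : ∀ α β, ((A α β)ᴴ * ρᴴ * (ρ * A α β)).trace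
        = ((ρᴴ * ρ) * ((M α)ᴴ * (M β * (M β)ᴴ) * M α)).trace := by
      intro α β
      rw [show (A α β)ᴴ * ρᴴ * (ρ * A α β)
          = (M β)ᴴ * (M α * (ρᴴ * (ρ * ((M α)ᴴ * M β)))) by
        simp only [hA, conjTranspose_mul, conjTranspose_conjTranspose]; noncomm_ring,
        trace_mul_comm ((M β)ᴴ),
        show M α * (ρᴴ * (ρ * ((M α)ᴴ * M β))) * (M β)ᴴ
          = M α * ((ρᴴ * ρ) * ((M α)ᴴ * (M β * (M β)ᴴ))) by noncomm_ring,
        trace_mul_comm (M α)]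
      congr 1
      noncomm_ring
    calc ∑ α, ∑ β, ((A α β)ᴴ * ρᴴ * (ρ * A α β)).trace
        = ∑ α, ((ρᴴ * ρ) * ((M α)ᴴ * (∑ β, M β * (M β)ᴴ) * M α)).trace := by
          refine Finset.sum_congr rfl fun α _ => ?_
          simp only [step, ← Matrix.trace_sum, Finset.mul_sum, Finset.sum_mul]
      _ = ∑ α, ((ρᴴ * ρ) * ((M α)ᴴ * M α)).trace := by
          simp [hunital]
      _ = (ρᴴ * ρ).trace := by
          simp only [← Matrix.trace_sum, ← Finset.mul_sum, htp, mul_one]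
  -- Term 4
  have T4 : ∑ α, ∑ β, (ρᴴ * (A α β)ᴴ * (A α β * ρ)).trace = (ρᴴ * ρ).trace := by
    have step : ∀ α β, (ρᴴ * (A α β)ᴴ * (A α β * ρ)).trace
        = (((M β)ᴴ * (M α * (M α)ᴴ) * M β) * (ρ * ρᴴ)).trace := by
      intro α β
      rw [show ρᴴ * (A α β)ᴴ * (A α β * ρ)
          = ρᴴ * ((M β)ᴴ * (M α * ((M α)ᴴ * (M β * ρ)))) by
        simp only [hA, conjTranspose_mul, conjTranspose_conjTranspose]; noncomm_ring,
        trace_mul_comm ρᴴ]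
      congr 1
      noncomm_ring
    calc ∑ α, ∑ β, (ρᴴ * (A α β)ᴴ * (A α β * ρ)).trace
        = ∑ β, (((M β)ᴴ * (∑ α, M α * (M α)ᴴ) * M β) * (ρ * ρᴴ)).trace := by
          rw [Finset.sum_comm]
          refine Finset.sum_congr rfl fun β _ => ?_
          simp only [step, ← Matrix.trace_sum, Finset.mul_sum, Finset.sum_mul]
      _ = ∑ β, (((M β)ᴴ * M β) * (ρ * ρᴴ)).trace := by simp [hunital]
      _ = (ρᴴ * ρ).trace := by
          simp only [← Matrix.trace_sum, ← Finset.sum_mul, htp, one_mul,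
            trace_mul_comm ρ]
  -- Term 2
  have T2 : ∑ α, ∑ β, ((A α β)ᴴ * ρᴴ * (A α β * ρ)).trace
      = ((Φ ρ)ᴴ * Φ ρ).trace := by
    have step : ∀ α β, ((A α β)ᴴ * ρᴴ * (A α β * ρ)).trace
        = ((M α * ρᴴ * (M α)ᴴ) * (M β * ρ * (M β)ᴴ)).trace := by
      intro α β
      rw [show (A α β)ᴴ * ρᴴ * (A α β * ρ)
          = (M β)ᴴ * (M α * ρᴴ * (M α)ᴴ * (M β * ρ)) by
        simp only [hA, conjTranspose_mul, conjTranspose_conjTranspose]; noncomm_ring,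
        trace_mul_comm ((M β)ᴴ)]
      congr 1
      noncomm_ring
    calc ∑ α, ∑ β, ((A α β)ᴴ * ρᴴ * (A α β * ρ)).trace
        = ∑ α, ∑ β, ((M α * ρᴴ * (M α)ᴴ) * (M β * ρ * (M β)ᴴ)).trace :=
          Finset.sum_congr rfl fun α _ => Finset.sum_congr rfl fun β _ => step α β
      _ = ((∑ α, M α * ρᴴ * (M α)ᴴ) * (∑ β, M β * ρ * (M β)ᴴ)).trace := by
          simp only [Finset.sum_mul, Finset.mul_sum, Matrix.trace_sum]
          exact Finset.sum_comm
      _ = ((Φ ρ)ᴴ * Φ ρ).trace := by rw [hΦH, hΦ]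
  -- Term 3
  have T3 : ∑ α, ∑ β, (ρᴴ * (A α β)ᴴ * (ρ * A α β)).trace
      = ((Φ ρ)ᴴ * Φ ρ).trace := by
    have step : ∀ α β, (ρᴴ * (A α β)ᴴ * (ρ * A α β)).trace
        = ((M β * ρᴴ * (M β)ᴴ) * (M α * ρ * (M α)ᴴ)).trace := by
      intro α β
      rw [show ρᴴ * (A α β)ᴴ * (ρ * A α β)
          = (ρᴴ * ((M β)ᴴ * (M α * (ρ * (M α)ᴴ)))) * M β by
        simp only [hA, conjTranspose_mul, conjTranspose_conjTranspose]; noncomm_ring,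
        trace_mul_comm _ (M β)]
      congr 1
      noncomm_ring
    calc ∑ α, ∑ β, (ρᴴ * (A α β)ᴴ * (ρ * A α β)).trace
        = ∑ β, ∑ α, ((M β * ρᴴ * (M β)ᴴ) * (M α * ρ * (M α)ᴴ)).trace := by
          rw [Finset.sum_comm]
          exact Finset.sum_congr rfl fun β _ => Finset.sum_congr rfl fun α _ => step α β
      _ = ((∑ β, M β * ρᴴ * (M β)ᴴ) * (∑ α, M α * ρ * (M α)ᴴ)).trace := by
          simp only [Finset.sum_mul, Finset.mul_sum, Matrix.trace_sum]
          exact Finset.sum_comm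
      _ = ((Φ ρ)ᴴ * Φ ρ).trace := by rw [hΦH, hΦ]
  -- key identity
  have key : ∑ α, ∑ β, ((D α β)ᴴ * (D α β)).trace
      = 2 * (ρᴴ * ρ).trace - 2 * ((Φ ρ)ᴴ * Φ ρ).trace := by
    have : ∑ α, ∑ β, ((D α β)ᴴ * (D α β)).trace
        = (∑ α, ∑ β, ((A α β)ᴴ * ρᴴ * (ρ * A α β)).trace)
          - (∑ α, ∑ β, ((A α β)ᴴ * ρᴴ * (A α β * ρ)).trace)
          - (∑ α, ∑ β, (ρᴴ * (A α β)ᴴ * (ρ * A α β)).trace)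
          + (∑ α, ∑ β, (ρᴴ * (A α β)ᴴ * (A α β * ρ)).trace) := by
      simp only [expand, Finset.sum_sub_distrib, Finset.sum_add_distrib]
    rw [this, T1, T2, T3, T4]
    ring
  -- reduce frobNorm equality to equality of real parts
  have hfrob : frobNorm (Φ ρ) = frobNorm ρ ↔
      (((Φ ρ)ᴴ * Φ ρ).trace).re = ((ρᴴ * ρ).trace).re := by
    exact Real.sqrt_inj (trace_hermsq_re_nonneg _) (trace_hermsq_re_nonneg _)
  rw [hfrob]
  constructor
  · intro h α β
    -- real part of key identity
    have hre : ∑ α, ∑ β, (((D α β)ᴴ * (D α β)).trace).re = 0 := by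
      have := congrArg Complex.re key
      simp only [Complex.sub_re, Complex.mul_re] at this
      rw [show (∑ α, ∑ β, ((D α β)ᴴ * (D α β)).trace).re
          = ∑ α, ∑ β, (((D α β)ᴴ * (D α β)).trace).re by
        rw [Complex.re_sum]; exact Finset.sum_congr rfl fun _ _ => Complex.re_sum _ _] at this
      simp only [this]
      norm_num [h]
    have hterm : (((D α β)ᴴ * (D α β)).trace).re = 0 := by
      have h1 := (Finset.sum_eq_zero_iff_of_nonneg
        (fun α _ => Finset.sum_nonneg fun β _ => trace_hermsq_re_nonneg (D α β))).mp hre α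
        (Finset.mem_univ α)
      exact (Finset.sum_eq_zero_iff_of_nonneg
        (fun β _ => trace_hermsq_re_nonneg (D α β))).mp h1 β (Finset.mem_univ β)
    have := eq_zero_of_trace_hermsq_re _ hterm
    have := sub_eq_zero.mp this
    exact this
  · intro h
    have hzero : ∀ α β, D α β = 0 := fun α β => by
      simp [hD, hA, sub_eq_zero, h α β]
    have : (0 : ℂ) = 2 * (ρᴴ * ρ).trace - 2 * ((Φ ρ)ᴴ * Φ ρ).trace := by
      rw [← key]
      simp [hzero]
    have htr : ((Φ ρ)ᴴ * Φ ρ).trace = (ρᴴ * ρ).trace := by linear_combination this / 2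
    rw [htr]
end

section
/- Let n be a positive natural number and let (E_α)_{α ∈ A} be a finite family of n×n positive semidefinite complex matrices with Σ_α E_α = I (a POVM), and define the bare measurement channel Φ(ρ) = Σ_α √E_α ρ √E_α. Then for every n×n complex matrix ρ, ‖Φ(ρ)‖_F = ‖ρ‖_F if and only if Φ(ρ) = ρ. -/
open Matrix
open scoped ComplexOrder

/-- The positive semidefinite square root of a positive semidefinite matrix (as in the older
Mathlib, where it was `Matrix.PosSemidef.sqrt`). -/
noncomputable def Matrix.PosSemidef.sqrt {m : Type*} [Fintype m] [DecidableEq m] {𝕜 : Type*}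
    [RCLike 𝕜] {A : Matrix m m 𝕜} (hA : A.PosSemidef) : Matrix m m 𝕜 :=
  hA.1.eigenvectorUnitary.1 * diagonal ((↑) ∘ (√·) ∘ hA.1.eigenvalues) *
  (star hA.1.eigenvectorUnitary : Matrix m m 𝕜)

/-!
Write `Φ ρ = ∑ α, K α * ρ * K α` with `K α = √(E α)`, so that the `K α` are positive and
`∑ α, K α * K α = 1`. Expanding squares gives `‖ρ‖² - ‖Φ ρ‖² = ∑ α, ‖K α * Φ ρ - ρ * K α‖²`;
hence equal norms force `K α * Φ ρ = ρ * K α` for every `α`, and summing `K α * Φ ρ * K α` then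
gives `Φ (Φ ρ) = ρ`. So `δ = Φ ρ - ρ` satisfies `Φ δ = -δ`. But `Φ` is a positive operator for
the Hilbert–Schmidt inner product, `Tr (δᴴ * Φ δ) = ∑ α, Tr ((δᴴ * K α * δ) * K α) ≥ 0`, so
`‖δ‖² = -Tr (δᴴ * Φ δ) ≤ 0`.
-/

namespace Matrix.PosSemidef

variable {m 𝕜 : Type*} [Fintype m] [DecidableEq m] [RCLike 𝕜] {A : Matrix m m 𝕜}

open MatrixOrder in
lemma sqrt_eq_cfcSqrt (hA : A.PosSemidef) : hA.sqrt = CFC.sqrt A := by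
  rw [CFC.sqrt_eq_cfc, cfc_nnreal_eq_real _ A, hA.1.cfc_eq]
  simp [IsHermitian.cfc, PosSemidef.sqrt, Function.comp_def, hA.eigenvalues_nonneg]

open MatrixOrder in
lemma posSemidef_sqrt (hA : A.PosSemidef) : hA.sqrt.PosSemidef := by
  rw [hA.sqrt_eq_cfcSqrt, ← nonneg_iff_posSemidef]
  exact CFC.sqrt_nonneg A

open MatrixOrder in
lemma sqrt_mul_sqrt (hA : A.PosSemidef) : hA.sqrt * hA.sqrt = A := by
  rw [hA.sqrt_eq_cfcSqrt]
  exact CFC.sqrt_mul_sqrt_self A (nonneg_iff_posSemidef.mpr hA)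

lemma trace_mul_nonneg {B : Matrix m m 𝕜} (hA : A.PosSemidef) (hB : B.PosSemidef) :
    0 ≤ (A * B).trace := by
  set S := hB.sqrt
  have hS : Sᴴ = S := hB.posSemidef_sqrt.1
  have hAS : (A * B).trace = (S * A * Sᴴ).trace := by
    rw [← hB.sqrt_mul_sqrt, hS, ← mul_assoc, trace_mul_cycle]
  rw [hAS]
  exact (hA.mul_mul_conjTranspose_same S).trace_nonneg

end Matrix.PosSemidef

section BareChannel

variable {ι m 𝕜 : Type*} [Fintype ι] [Fintype m] [RCLike 𝕜] (K : ι → Matrix m m 𝕜)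

def bareChannel (ρ : Matrix m m 𝕜) : Matrix m m 𝕜 := ∑ α, K α * ρ * K α

lemma bareChannel_sub (ρ τ : Matrix m m 𝕜) :
    bareChannel K (ρ - τ) = bareChannel K ρ - bareChannel K τ := by
  simp only [bareChannel, mul_sub, sub_mul, Finset.sum_sub_distrib]

variable {K}

lemma bareChannel_conjTranspose (hK : ∀ α, (K α).IsHermitian) (ρ : Matrix m m 𝕜) :
    bareChannel K ρᴴ = (bareChannel K ρ)ᴴ := by
  simp only [bareChannel, conjTranspose_sum, conjTranspose_mul, (hK _).eq, mul_assoc]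

variable [DecidableEq m]

lemma trace_bareChannel (hK1 : ∑ α, K α * K α = 1) (ρ : Matrix m m 𝕜) :
    (bareChannel K ρ).trace = ρ.trace := by
  simp only [bareChannel, trace_sum, trace_mul_cycle _ ρ]
  rw [← trace_sum, ← Finset.sum_mul, hK1, one_mul]

lemma sum_trace_commutator_defect (hK : ∀ α, (K α).IsHermitian) (hK1 : ∑ α, K α * K α = 1)
    (ρ : Matrix m m 𝕜) :
    ∑ α, ((K α * bareChannel K ρ - ρ * K α)ᴴ * (K α * bareChannel K ρ - ρ * K α)).trace =
      (ρᴴ * ρ).trace - ((bareChannel K ρ)ᴴ * bareChannel K ρ).trace := by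
  set σ := bareChannel K ρ with hσ
  have hterm : ∀ α, (K α * σ - ρ * K α)ᴴ * (K α * σ - ρ * K α) =
      σᴴ * (K α * K α) * σ - σᴴ * (K α * ρ * K α) - K α * ρᴴ * K α * σ
        + K α * (ρᴴ * ρ) * K α := by
    intro α
    simp only [conjTranspose_sub, conjTranspose_mul, (hK α).eq]
    noncomm_ring
  have hsum : ∑ α, (K α * σ - ρ * K α)ᴴ * (K α * σ - ρ * K α) =
      σᴴ * σ - σᴴ * σ - σᴴ * σ + bareChannel K (ρᴴ * ρ) := by
    simp only [hterm, Finset.sum_add_distrib, Finset.sum_sub_distrib, ← Finset.mul_sum,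
      ← Finset.sum_mul, hK1, mul_one, ← bareChannel.eq_1, bareChannel_conjTranspose hK, ← hσ]
  rw [← trace_sum, hsum, trace_add, trace_sub, trace_sub, trace_bareChannel hK1]
  ring

lemma mul_bareChannel_eq_of_trace_eq (hK : ∀ α, (K α).IsHermitian) (hK1 : ∑ α, K α * K α = 1)
    {ρ : Matrix m m 𝕜} (h : ((bareChannel K ρ)ᴴ * bareChannel K ρ).trace = (ρᴴ * ρ).trace)
    (α : ι) : K α * bareChannel K ρ = ρ * K α := by
  have hzero := sum_trace_commutator_defect hK hK1 ρ
  rw [h, sub_self, Finset.sum_eq_zero_iff_of_nonneg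
    fun α _ ↦ (posSemidef_conjTranspose_mul_self _).trace_nonneg] at hzero
  exact sub_eq_zero.mp (trace_conjTranspose_mul_self_eq_zero_iff.mp (hzero α (Finset.mem_univ α)))

lemma bareChannel_eq_of_mul_eq (hK1 : ∑ α, K α * K α = 1) {ρ σ : Matrix m m 𝕜}
    (h : ∀ α, K α * σ = ρ * K α) : bareChannel K σ = ρ := by
  simp only [bareChannel, h, mul_assoc, ← Finset.mul_sum, hK1, mul_one]

lemma trace_conjTranspose_mul_bareChannel_nonneg (hK : ∀ α, (K α).PosSemidef)
    (δ : Matrix m m 𝕜) : 0 ≤ (δᴴ * bareChannel K δ).trace := by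
  rw [bareChannel, Finset.mul_sum, trace_sum]
  refine Finset.sum_nonneg fun α _ ↦ ?_
  rw [← mul_assoc, ← mul_assoc]
  exact ((hK α).conjTranspose_mul_mul_same δ).trace_mul_nonneg (hK α)

lemma eq_zero_of_bareChannel_eq_neg (hK : ∀ α, (K α).PosSemidef) {δ : Matrix m m 𝕜}
    (h : bareChannel K δ = -δ) : δ = 0 := by
  have hnonneg := trace_conjTranspose_mul_bareChannel_nonneg hK δ
  rw [h, mul_neg, trace_neg, neg_nonneg] at hnonneg
  exact trace_conjTranspose_mul_self_eq_zero_iff.mp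
    (le_antisymm hnonneg (posSemidef_conjTranspose_mul_self δ).trace_nonneg)

theorem bareChannel_eq_self_of_trace_eq (hK : ∀ α, (K α).PosSemidef)
    (hK1 : ∑ α, K α * K α = 1) {ρ : Matrix m m 𝕜}
    (h : ((bareChannel K ρ)ᴴ * bareChannel K ρ).trace = (ρᴴ * ρ).trace) :
    bareChannel K ρ = ρ := by
  have hinv : bareChannel K (bareChannel K ρ) = ρ :=
    bareChannel_eq_of_mul_eq hK1 (mul_bareChannel_eq_of_trace_eq (fun α ↦ (hK α).1) hK1 h)
  exact sub_eq_zero.mp (eq_zero_of_bareChannel_eq_neg hK (by rw [bareChannel_sub, hinv, neg_sub]))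

end BareChannel

lemma frobNorm_eq_iff {n : ℕ} {A B : Matrix (Fin n) (Fin n) ℂ} :
    frobNorm A = frobNorm B ↔ (Aᴴ * A).trace = (Bᴴ * B).trace := by
  have hnonneg (X : Matrix (Fin n) (Fin n) ℂ) : 0 ≤ (Xᴴ * X).trace :=
    (posSemidef_conjTranspose_mul_self X).trace_nonneg
  have hreal (X : Matrix (Fin n) (Fin n) ℂ) : (Xᴴ * X).trace = (Xᴴ * X).trace.re :=
    Complex.eq_re_of_ofReal_le (r := 0) (by simpa using hnonneg X)
  rw [frobNorm, frobNorm, Real.sqrt_inj (Complex.nonneg_iff.mp (hnonneg A)).1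
    (Complex.nonneg_iff.mp (hnonneg B)).1]
  exact ⟨fun h ↦ by rw [hreal A, hreal B, h], congrArg Complex.re⟩

theorem stmt_4_general (n : ℕ) (k : ℕ)
    (E : Fin k → Matrix (Fin n) (Fin n) ℂ)
    (hE : ∀ α, (E α).PosSemidef)
    (hsum : ∑ α, E α = 1)
    (Φ : Matrix (Fin n) (Fin n) ℂ → Matrix (Fin n) (Fin n) ℂ)
    (hΦ : ∀ ρ, Φ ρ = ∑ α, (hE α).sqrt * ρ * (hE α).sqrt)
    (ρ : Matrix (Fin n) (Fin n) ℂ) :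
    frobNorm (Φ ρ) = frobNorm ρ ↔ Φ ρ = ρ := by
  have hK : ∀ α, (hE α).sqrt.PosSemidef := fun α ↦ (hE α).posSemidef_sqrt
  have hK1 : ∑ α, (hE α).sqrt * (hE α).sqrt = 1 := by
    simp only [PosSemidef.sqrt_mul_sqrt, hsum]
  have hΦK : Φ ρ = bareChannel (fun α ↦ (hE α).sqrt) ρ := hΦ ρ
  rw [hΦK, frobNorm_eq_iff]
  exact ⟨bareChannel_eq_self_of_trace_eq hK hK1, fun h ↦ by rw [h]⟩

theorem stmt_4 (n : ℕ) (hn : 0 < n) (k : ℕ)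
    (E : Fin k → Matrix (Fin n) (Fin n) ℂ)
    (hE : ∀ α, (E α).PosSemidef)
    (hsum : ∑ α, E α = 1)
    (Φ : Matrix (Fin n) (Fin n) ℂ → Matrix (Fin n) (Fin n) ℂ)
    (hΦ : ∀ ρ, Φ ρ = ∑ α, (hE α).sqrt * ρ * (hE α).sqrt)
    (ρ : Matrix (Fin n) (Fin n) ℂ) :
    frobNorm (Φ ρ) = frobNorm ρ ↔ Φ ρ = ρ :=
  stmt_4_general n k E hE hsum Φ hΦ ρ
end

section
/- Let Φ₁, …, Φ_N be bare measurement channels on n×n complex matrices and let Φ = Φ_N ∘ ⋯ ∘ Φ₁ be their composition. If ρ is a nonzero n×n complex matrix and λ is a complex number with |λ| = 1 such that Φ(ρ) = λ • ρ, then Φ_i(ρ) = ρ for every i = 1, …, N. -/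
open Matrix
open scoped ComplexOrder

/-- A bare measurement channel: `Φ(ρ) = Σ_α √E_α ρ √E_α` for some POVM `(E_α)`. -/
def IsBareChannel {n : ℕ}
    (Φ : Matrix (Fin n) (Fin n) ℂ → Matrix (Fin n) (Fin n) ℂ) : Prop :=
  ∃ (k : ℕ) (E : Fin k → Matrix (Fin n) (Fin n) ℂ)
    (hE : ∀ α, (E α).PosSemidef),
      (∑ α, E α) = 1 ∧ ∀ ρ, Φ ρ = ∑ α, ((hE α).1.eigenvectorUnitary.1 *
        diagonal ((↑) ∘ (Real.sqrt ∘ (hE α).1.eigenvalues)) *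
        (star (hE α).1.eigenvectorUnitary : Matrix (Fin n) (Fin n) ℂ)) * ρ *
        ((hE α).1.eigenvectorUnitary.1 *
        diagonal ((↑) ∘ (Real.sqrt ∘ (hE α).1.eigenvalues)) *
        (star (hE α).1.eigenvectorUnitary : Matrix (Fin n) (Fin n) ℂ))

/-!
With `S_α = √E_α`, a bare channel is `Φ X = ∑ α, S_α X S_α` with `∑ α, S_α² = 1`. In the
Hilbert–Schmidt inner product `⟪Y, Φ X⟫ = ∑ α, ⟪S_α Y, X S_α⟫`, where `Y ↦ (S_α Y)_α` and
`X ↦ (X S_α)_α` are isometries, so `Φ` is a contraction. Writing `S_α = B_αᴴ B_α` gives the Gram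
representation `⟪X, Φ Y⟫ = ∑ α, ⟪B_α X B_αᴴ, B_α Y B_αᴴ⟫`, and Cauchy–Schwarz for this positive
form shows that a contraction of this kind fixes every vector whose norm it preserves.
Since `|λ| = 1`, the composite `Φ_N ∘ ⋯ ∘ Φ₁` preserves the norm of `ρ`; as every factor is a
contraction, `Φ₁` preserves it, hence fixes `ρ`, and the argument passes on to `Φ₂, …, Φ_N`.
-/

open scoped InnerProductSpace MatrixOrder

section Gram

variable {𝕜 E F : Type*} [RCLike 𝕜] [NormedAddCommGroup E] [InnerProductSpace 𝕜 E]
  [SeminormedAddCommGroup F] [InnerProductSpace 𝕜 F]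

theorem norm_apply_le_of_inner_apply_eq {T : E → E} {L R : E → F}
    (hL : ∀ x, ‖L x‖ = ‖x‖) (hR : ∀ x, ‖R x‖ = ‖x‖) (hT : ∀ x y, ⟪y, T x⟫_𝕜 = ⟪L y, R x⟫_𝕜)
    (x : E) : ‖T x‖ ≤ ‖x‖ := by
  have h : ‖T x‖ ^ 2 ≤ ‖T x‖ * ‖x‖ :=
    calc ‖T x‖ ^ 2 = RCLike.re ⟪L (T x), R x⟫_𝕜 := by rw [← hT, inner_self_eq_norm_sq]
      _ ≤ ‖L (T x)‖ * ‖R x‖ := re_inner_le_norm _ _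
      _ = ‖T x‖ * ‖x‖ := by rw [hL, hR]
  nlinarith [norm_nonneg (T x), norm_nonneg x]

theorem apply_eq_self_of_norm_apply_eq {T : E → E} {G : E → F}
    (hG : ∀ x y, ⟪x, T y⟫_𝕜 = ⟪G x, G y⟫_𝕜) (hT : ∀ x, ‖T x‖ ≤ ‖x‖) {x : E}
    (hx : ‖T x‖ = ‖x‖) : T x = x := by
  have hsymm : ∀ y z, ⟪T y, z⟫_𝕜 = ⟪y, T z⟫_𝕜 := fun y z => by
    rw [← inner_conj_symm, hG, inner_conj_symm, ← hG]
  have hGsq : ∀ y, ‖G y‖ ^ 2 = RCLike.re ⟪y, T y⟫_𝕜 := fun y => by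
    rw [hG, inner_self_eq_norm_sq (𝕜 := 𝕜)]
  have hGx : ‖G x‖ ^ 2 ≤ ‖x‖ ^ 2 := by
    rw [hGsq, sq]
    exact (re_inner_le_norm _ _).trans_eq (by rw [hx])
  have hGTx : ‖G (T x)‖ ^ 2 ≤ ‖x‖ ^ 2 := by
    rw [hGsq, sq]
    calc RCLike.re ⟪T x, T (T x)⟫_𝕜 ≤ ‖T x‖ * ‖T (T x)‖ := re_inner_le_norm _ _
      _ ≤ ‖x‖ * ‖x‖ := by rw [hx]; exact mul_le_mul_of_nonneg_left (hx ▸ hT _) (norm_nonneg _)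
  have hcs : ‖x‖ ^ 2 ≤ ‖G x‖ * ‖G (T x)‖ := by
    rw [← hx, ← inner_self_eq_norm_sq (𝕜 := 𝕜), hsymm, hG]
    exact re_inner_le_norm _ _
  -- `‖x‖⁴ ≤ ‖G x‖² ‖G (T x)‖² ≤ ‖G x‖² ‖x‖²`
  have hre : ‖x‖ ^ 2 ≤ RCLike.re ⟪x, T x⟫_𝕜 := by
    rw [← hGsq]
    nlinarith [norm_nonneg (G x), norm_nonneg (G (T x)), norm_nonneg x]
  have hdist : ‖T x - x‖ ^ 2 ≤ 0 := by
    rw [@norm_sub_sq 𝕜, inner_re_symm, hx]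
    linarith
  rw [← sub_eq_zero, ← norm_le_zero_iff]
  nlinarith [norm_nonneg (T x - x)]

end Gram

namespace List

variable {α β : Type*}

theorem foldl_comp_apply (l : List (α → α)) (f : α → α) (x : α) :
    l.foldl (fun f g => g ∘ f) f x = l.foldl (fun y g => g y) (f x) := by
  induction l generalizing f with
  | nil => rfl
  | cons g l ih => exact ih (g ∘ f)

variable [PartialOrder β] (ν : α → β) {l : List (α → α)}

theorem foldl_apply_le (hle : ∀ g ∈ l, ∀ x, ν (g x) ≤ ν x) (x : α) :
    ν (l.foldl (fun y g => g y) x) ≤ ν x := by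
  induction l generalizing x with
  | nil => exact le_rfl
  | cons g l ih =>
    exact (ih (fun h hh => hle h (mem_cons_of_mem _ hh)) (g x)).trans (hle g mem_cons_self x)

theorem forall_apply_eq_self_of_le_foldl (hle : ∀ g ∈ l, ∀ x, ν (g x) ≤ ν x)
    (heq : ∀ g ∈ l, ∀ x, ν (g x) = ν x → g x = x) {x : α}
    (hx : ν x ≤ ν (l.foldl (fun y g => g y) x)) : ∀ g ∈ l, g x = x := by
  induction l with
  | nil => simp
  | cons g l ih =>
    have hle' : ∀ h ∈ l, ∀ x, ν (h x) ≤ ν x := fun h hh => hle h (mem_cons_of_mem _ hh)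
    have hgx : g x = x := heq g mem_cons_self x <|
      le_antisymm (hle g mem_cons_self x) (hx.trans (foldl_apply_le ν hle' (g x)))
    rw [foldl_cons, hgx] at hx
    exact forall_mem_cons.mpr
      ⟨hgx, ih hle' (fun h hh => heq h (mem_cons_of_mem _ hh)) hx⟩

end List

namespace Matrix

variable {𝕜 m : Type*} [RCLike 𝕜] [Fintype m] [DecidableEq m]

theorem PosSemidef.eigenvectorUnitary_mul_diagonal_sqrt_mul_star {A : Matrix m m 𝕜}
    (hA : A.PosSemidef) :
    (hA.1.eigenvectorUnitary : Matrix m m 𝕜) * diagonal ((↑) ∘ (Real.sqrt ∘ hA.1.eigenvalues)) *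
      (star hA.1.eigenvectorUnitary : Matrix m m 𝕜) = CFC.sqrt A := by
  rw [CFC.sqrt_eq_cfc, cfc_nnreal_eq_real _ A hA.nonneg, hA.1.cfc_eq, IsHermitian.cfc,
    Unitary.conjStarAlgAut_apply]
  unfold Real.sqrt
  rfl

theorem PosSemidef.exists_eq_conjTranspose_mul_self {A : Matrix m m 𝕜} (hA : A.PosSemidef) :
    ∃ B : Matrix m m 𝕜, A = Bᴴ * B :=
  CStarAlgebra.nonneg_iff_eq_star_mul_self.mp hA.nonneg

end Matrix

theorem IsBareChannel.exists_sum_mul_mul {n : ℕ}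
    {Φ : Matrix (Fin n) (Fin n) ℂ → Matrix (Fin n) (Fin n) ℂ} (hΦ : IsBareChannel Φ) :
    ∃ (k : ℕ) (S : Fin k → Matrix (Fin n) (Fin n) ℂ), (∀ α, (S α).PosSemidef) ∧
      ∑ α, S α * S α = 1 ∧ ∀ ρ, Φ ρ = ∑ α, S α * ρ * S α := by
  obtain ⟨k, E, hE, hsum, hΦ⟩ := hΦ
  have hsqrt (α : Fin k) : (hE α).1.eigenvectorUnitary.1 *
      diagonal ((↑) ∘ (Real.sqrt ∘ (hE α).1.eigenvalues)) *
      (star (hE α).1.eigenvectorUnitary : Matrix (Fin n) (Fin n) ℂ) = CFC.sqrt (E α) :=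
    (hE α).eigenvectorUnitary_mul_diagonal_sqrt_mul_star
  refine ⟨k, fun α => CFC.sqrt (E α), fun α => (CFC.sqrt_nonneg _).posSemidef, ?_, fun ρ => ?_⟩
  · simp_rw [CFC.sqrt_mul_sqrt_self _ (hE _).nonneg, hsum]
  · simp_rw [hΦ, hsqrt]

section HilbertSchmidt

variable {𝕜 m ι : Type*} [RCLike 𝕜] [Fintype m] [DecidableEq m] [Fintype ι]

/-- The Hilbert–Schmidt norm. It is not a global instance because it would induce a second
topology on matrices, conflicting with the one the continuous functional calculus uses. -/
noncomputable abbrev Matrix.hilbertSchmidtNormedAddCommGroup :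
    NormedAddCommGroup (Matrix m m 𝕜) :=
  toMatrixNormedAddCommGroup 1 PosDef.one

attribute [local instance] Matrix.hilbertSchmidtNormedAddCommGroup

noncomputable abbrev Matrix.hilbertSchmidtInnerProductSpace :
    InnerProductSpace 𝕜 (Matrix m m 𝕜) :=
  toMatrixInnerProductSpace 1 PosSemidef.one

attribute [local instance] Matrix.hilbertSchmidtInnerProductSpace

namespace Matrix

theorem hilbertSchmidt_inner_eq (X Y : Matrix m m 𝕜) : ⟪X, Y⟫_𝕜 = (Xᴴ * Y).trace := by
  show (Y * 1 * Xᴴ).trace = _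
  rw [Matrix.mul_one, trace_mul_comm]

theorem inner_toLp_eq_sum (f g : ι → Matrix m m 𝕜) :
    ⟪WithLp.toLp 2 f, WithLp.toLp 2 g⟫_𝕜 = ∑ α, ((f α)ᴴ * g α).trace := by
  simp only [PiLp.inner_apply, hilbertSchmidt_inner_eq]

variable {S : ι → Matrix m m 𝕜}

theorem norm_toLp_mul_left (hS : ∀ α, (S α).IsHermitian) (hS1 : ∑ α, S α * S α = 1)
    (Y : Matrix m m 𝕜) : ‖WithLp.toLp 2 (fun α => S α * Y)‖ = ‖Y‖ := by
  rw [norm_eq_sqrt_re_inner (𝕜 := 𝕜), norm_eq_sqrt_re_inner (𝕜 := 𝕜), inner_toLp_eq_sum,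
    hilbertSchmidt_inner_eq]
  congr 3
  calc ∑ α, ((S α * Y)ᴴ * (S α * Y)).trace = (Yᴴ * (∑ α, S α * S α) * Y).trace := by
        simp only [conjTranspose_mul, (hS _).eq, Matrix.mul_sum, Matrix.sum_mul, trace_sum,
          Matrix.mul_assoc]
    _ = (Yᴴ * Y).trace := by rw [hS1, Matrix.mul_one]

theorem norm_toLp_mul_right (hS : ∀ α, (S α).IsHermitian) (hS1 : ∑ α, S α * S α = 1)
    (Y : Matrix m m 𝕜) : ‖WithLp.toLp 2 (fun α => Y * S α)‖ = ‖Y‖ := by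
  rw [norm_eq_sqrt_re_inner (𝕜 := 𝕜), norm_eq_sqrt_re_inner (𝕜 := 𝕜), inner_toLp_eq_sum,
    hilbertSchmidt_inner_eq]
  congr 3
  calc ∑ α, ((Y * S α)ᴴ * (Y * S α)).trace = (Yᴴ * Y * (∑ α, S α * S α)).trace := by
        simp only [conjTranspose_mul, (hS _).eq, Matrix.mul_sum, trace_sum]
        exact Finset.sum_congr rfl fun α _ => by
          simp only [Matrix.mul_assoc]
          rw [trace_mul_comm (S α)]
          simp only [Matrix.mul_assoc]
    _ = (Yᴴ * Y).trace := by rw [hS1, Matrix.mul_one]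

theorem inner_sum_mul_mul (hS : ∀ α, (S α).IsHermitian) (X Y : Matrix m m 𝕜) :
    ⟪Y, ∑ α, S α * X * S α⟫_𝕜 =
      ⟪WithLp.toLp 2 (fun α => S α * Y), WithLp.toLp 2 (fun α => X * S α)⟫_𝕜 := by
  simp only [inner_toLp_eq_sum, hilbertSchmidt_inner_eq, conjTranspose_mul, (hS _).eq,
    Matrix.mul_sum, trace_sum, Matrix.mul_assoc]

theorem inner_sum_conjTranspose_mul_mul (B : ι → Matrix m m 𝕜) (X Y : Matrix m m 𝕜) :
    ⟪X, ∑ α, (B α)ᴴ * B α * Y * ((B α)ᴴ * B α)⟫_𝕜 =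
      ⟪WithLp.toLp 2 (fun α => B α * X * (B α)ᴴ), WithLp.toLp 2 (fun α => B α * Y * (B α)ᴴ)⟫_𝕜 := by
  simp only [inner_toLp_eq_sum, hilbertSchmidt_inner_eq, conjTranspose_mul,
    conjTranspose_conjTranspose, Matrix.mul_sum, trace_sum]
  exact Finset.sum_congr rfl fun α _ => by
    simp only [Matrix.mul_assoc]
    rw [trace_mul_comm (B α)]
    simp only [Matrix.mul_assoc]

theorem norm_sum_mul_mul_le (hS : ∀ α, (S α).IsHermitian) (hS1 : ∑ α, S α * S α = 1)
    (X : Matrix m m 𝕜) : ‖∑ α, S α * X * S α‖ ≤ ‖X‖ :=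
  norm_apply_le_of_inner_apply_eq (norm_toLp_mul_left hS hS1) (norm_toLp_mul_right hS hS1)
    (inner_sum_mul_mul hS) X

theorem sum_mul_mul_eq_self_of_norm_eq (hS : ∀ α, (S α).PosSemidef)
    (hS1 : ∑ α, S α * S α = 1) {X : Matrix m m 𝕜} (hX : ‖∑ α, S α * X * S α‖ = ‖X‖) :
    ∑ α, S α * X * S α = X := by
  choose B hB using fun α => (hS α).exists_eq_conjTranspose_mul_self
  have hG := inner_sum_conjTranspose_mul_mul B
  simp only [← hB] at hG
  exact apply_eq_self_of_norm_apply_eq hG (norm_sum_mul_mul_le (fun α => (hS α).1) hS1) hX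

end Matrix

theorem IsBareChannel.norm_apply_le {n : ℕ}
    {Φ : Matrix (Fin n) (Fin n) ℂ → Matrix (Fin n) (Fin n) ℂ} (hΦ : IsBareChannel Φ)
    (X : Matrix (Fin n) (Fin n) ℂ) : ‖Φ X‖ ≤ ‖X‖ := by
  obtain ⟨k, S, hS, hS1, hΦ⟩ := hΦ.exists_sum_mul_mul
  rw [hΦ]
  exact norm_sum_mul_mul_le (fun α => (hS α).1) hS1 X

theorem IsBareChannel.apply_eq_self_of_norm_eq {n : ℕ}
    {Φ : Matrix (Fin n) (Fin n) ℂ → Matrix (Fin n) (Fin n) ℂ} (hΦ : IsBareChannel Φ)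
    {X : Matrix (Fin n) (Fin n) ℂ} (hX : ‖Φ X‖ = ‖X‖) : Φ X = X := by
  obtain ⟨k, S, hS, hS1, hΦ⟩ := hΦ.exists_sum_mul_mul
  rw [hΦ] at hX ⊢
  exact sum_mul_mul_eq_self_of_norm_eq hS hS1 hX

theorem IsBareChannel.forall_apply_eq_self_of_foldl_eq_smul {n : ℕ}
    {l : List (Matrix (Fin n) (Fin n) ℂ → Matrix (Fin n) (Fin n) ℂ)}
    (hl : ∀ g ∈ l, IsBareChannel g) {ρ : Matrix (Fin n) (Fin n) ℂ} {c : ℂ} (hc : ‖c‖ = 1)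
    (h : l.foldl (fun y g => g y) ρ = c • ρ) : ∀ g ∈ l, g ρ = ρ :=
  l.forall_apply_eq_self_of_le_foldl (‖·‖) (fun g hg => (hl g hg).norm_apply_le)
    (fun g hg _ => (hl g hg).apply_eq_self_of_norm_eq) (by rw [h, norm_smul, hc, one_mul])

end HilbertSchmidt

theorem stmt_7_general (n N : ℕ)
    (Φs : Fin N → (Matrix (Fin n) (Fin n) ℂ → Matrix (Fin n) (Fin n) ℂ))
    (hbare : ∀ i, IsBareChannel (Φs i))
    (Φ : Matrix (Fin n) (Fin n) ℂ → Matrix (Fin n) (Fin n) ℂ)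
    (hΦ : Φ = (List.ofFn Φs).foldl (fun f g => g ∘ f) id)
    (ρ : Matrix (Fin n) (Fin n) ℂ)
    (lam : ℂ) (hlam : ‖lam‖ = 1)
    (heig : Φ ρ = lam • ρ) :
    ∀ i, Φs i ρ = ρ := by
  refine List.forall_mem_ofFn_iff.mp <|
    IsBareChannel.forall_apply_eq_self_of_foldl_eq_smul (List.forall_mem_ofFn_iff.mpr hbare) hlam ?_
  rw [← heig, hΦ, List.foldl_comp_apply]
  rfl

theorem stmt_7 (n N : ℕ)
    (Φs : Fin N → (Matrix (Fin n) (Fin n) ℂ → Matrix (Fin n) (Fin n) ℂ))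
    (hbare : ∀ i, IsBareChannel (Φs i))
    (Φ : Matrix (Fin n) (Fin n) ℂ → Matrix (Fin n) (Fin n) ℂ)
    (hΦ : Φ = (List.ofFn Φs).foldl (fun f g => g ∘ f) id)
    (ρ : Matrix (Fin n) (Fin n) ℂ) (hρ : ρ ≠ 0)
    (lam : ℂ) (hlam : ‖lam‖ = 1)
    (heig : Φ ρ = lam • ρ) :
    ∀ i, Φs i ρ = ρ :=
  stmt_7_general n N Φs hbare Φ hΦ ρ lam hlam heig
end

section
/- Let Φ be a complex-linear endomorphism of the space of n×n complex matrices of Kraus form Φ(ρ) = Σ_{m ∈ A} M_m ρ M_m† for a finite family (M_m) of n×n complex matrices. If there exists an invertible complex-linear map 𝒰 on n×n complex matrices with 𝒰 ∘ Φ ∘ 𝒰⁻¹ = −Φ, then Tr(M_m) = 0 for every m ∈ A. -/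
/-!
Conjugation preserves the trace of a linear map, so `𝒰 ∘ Φ ∘ 𝒰⁻¹ = -Φ` forces `Tr Φ = 0`.
On the other hand the trace of `ρ ↦ A ρ B` on matrices is `Tr A · Tr B`, so the trace of the
Kraus map is `∑ₘ |Tr Mₘ|²`, a sum of nonnegative terms which vanishes only if every `Tr Mₘ` does.
-/

open Matrix

open scoped ComplexOrder

theorem LinearMap.trace_eq_zero_of_conj_eq_neg {R M : Type*} [CommRing R] [NoZeroDivisors R]
    [CharZero R] [AddCommGroup M] [Module R M] [Module.Free R M] [Module.Finite R M]
    (T : M →ₗ[R] M) (U : M ≃ₗ[R] M) (hU : ∀ x, U (T (U.symm x)) = -T x) :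
    trace R M T = 0 := by
  have hconj : U.conj T = -T := by
    ext x
    simp [LinearEquiv.conj_apply, hU x]
  have := trace_conj' T U
  rwa [hconj, map_neg, CharZero.neg_eq_self_iff] at this

theorem Finset.sum_mul_star_self_eq_zero_iff {ι R : Type*} [NonUnitalSemiring R] [PartialOrder R]
    [StarRing R] [StarOrderedRing R] [NoZeroDivisors R] {s : Finset ι} {f : ι → R} :
    ∑ i ∈ s, f i * star (f i) = 0 ↔ ∀ i ∈ s, f i = 0 := by
  rw [Finset.sum_eq_zero_iff_of_nonneg fun i _ => mul_star_self_nonneg (f i)]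
  simp only [mul_eq_zero, star_eq_zero, or_self]

theorem Matrix.mul_single_mul_apply_same {ι R : Type*} [Fintype ι] [DecidableEq ι] [Semiring R]
    (A B : Matrix ι ι R) (i j : ι) (c : R) :
    (A * single i j c * B) i j = A i i * c * B j j := by
  rw [Matrix.mul_assoc, mul_apply, Finset.sum_eq_single i (fun k _ hk => by simp [hk])
    (by simp), single_mul_apply_same, mul_assoc]

theorem Matrix.trace_mulRight_comp_mulLeft {ι R : Type*} [Fintype ι] [DecidableEq ι] [CommRing R]
    (A B : Matrix ι ι R) :
    LinearMap.trace R _ (LinearMap.mulRight R B ∘ₗ LinearMap.mulLeft R A) = A.trace * B.trace := by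
  rw [LinearMap.trace_eq_matrix_trace R (stdBasis R ι ι), Matrix.trace, Fintype.sum_prod_type,
    Matrix.trace, Matrix.trace, Finset.sum_mul_sum]
  refine Finset.sum_congr rfl fun i _ => Finset.sum_congr rfl fun j _ => ?_
  rw [diag_apply, LinearMap.toMatrix_apply, stdBasis_eq_single]
  change (A * single i j (1 : R) * B : Matrix ι ι R) i j = _
  rw [mul_single_mul_apply_same, mul_one, diag_apply, diag_apply]

theorem stmt_14 (n k : ℕ) (M : Fin k → Matrix (Fin n) (Fin n) ℂ)
    (T : Matrix (Fin n) (Fin n) ℂ →ₗ[ℂ] Matrix (Fin n) (Fin n) ℂ)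
    (hT : ∀ ρ, T ρ = ∑ m, M m * ρ * (M m)ᴴ)
    (hsym : ∃ U : Matrix (Fin n) (Fin n) ℂ ≃ₗ[ℂ] Matrix (Fin n) (Fin n) ℂ,
      ∀ ρ, U (T (U.symm ρ)) = -(T ρ)) :
    ∀ m, (M m).trace = 0 := by
  obtain ⟨U, hU⟩ := hsym
  have hkraus : T = ∑ m, LinearMap.mulRight ℂ (M m)ᴴ ∘ₗ LinearMap.mulLeft ℂ (M m) := by
    ext ρ : 1
    simp [hT]
  have htrace : ∑ m, (M m).trace * star (M m).trace = 0 := by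
    rw [← LinearMap.trace_eq_zero_of_conj_eq_neg T U hU, hkraus, map_sum]
    simp only [trace_mulRight_comp_mulLeft, trace_conjTranspose]
  exact fun m => Finset.sum_mul_star_self_eq_zero_iff.1 htrace m (Finset.mem_univ m)
end

section
/- Let Φ be a complex-linear endomorphism of the space of n×n complex matrices of Kraus form Φ(ρ) = Σ_{m ∈ A} M_m ρ M_m† for a finite family (M_m) of n×n complex matrices, and let Φ* denote its adjoint with respect to the Hilbert–Schmidt inner product. If there exists an invertible complex-linear map 𝒰 on n×n complex matrices with 𝒰 ∘ Φ* ∘ 𝒰⁻¹ = −Φ, then Tr(M_m) = 0 for every m ∈ A. -/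
/-!
The trace of `X ↦ A X B` on matrices is `tr A · tr B`, so `tr Φ = ∑ₘ |tr Mₘ|² ≥ 0`. Taking the
Hilbert–Schmidt adjoint conjugates the trace and similarity preserves it, so
`conj (tr Φ) = tr Φ* = -tr Φ`. A nonnegative real equal to its own negative is zero, and then so
is every summand `|tr Mₘ|²`.
-/

open Matrix

namespace Matrix

@[simp]
theorem stdBasis_repr_apply {R m n : Type*} [Fintype m] [Fintype n] [Semiring R]
    (X : Matrix m n R) (p : m × n) : (stdBasis R m n).repr X p = X p.1 p.2 :=
  rfl

variable {R ι : Type*} [CommRing R] [Fintype ι] [DecidableEq ι]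

theorem linearMap_trace_eq_sum_apply_single (L : Matrix ι ι R →ₗ[R] Matrix ι ι R) :
    LinearMap.trace R _ L = ∑ i, ∑ j, L (single i j 1) i j := by
  rw [LinearMap.trace_eq_matrix_trace R (stdBasis R ι ι), Matrix.trace, Fintype.sum_prod_type]
  simp [LinearMap.toMatrix_apply, stdBasis_eq_single]

theorem linearMap_trace_mulLeftRight (A B : Matrix ι ι R) :
    LinearMap.trace R _ (LinearMap.mulLeftRight R (A, B)) = A.trace * B.trace := by
  simp [linearMap_trace_eq_sum_apply_single, Matrix.trace, Finset.sum_mul_sum, mul_apply,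
    single_apply, ite_and]

theorem linearMap_trace_eq_star_of_trace_conjTranspose_mul [StarRing R]
    {S T : Matrix ι ι R →ₗ[R] Matrix ι ι R}
    (h : ∀ A B, (Aᴴ * T B).trace = ((S A)ᴴ * B).trace) :
    LinearMap.trace R _ S = star (LinearMap.trace R _ T) := by
  simp only [linearMap_trace_eq_sum_apply_single, star_sum]
  refine Finset.sum_congr rfl fun i _ => Finset.sum_congr rfl fun j _ => ?_
  have hij := h (single i j 1) (single i j 1)
  simp [trace_single_mul, trace_mul_single] at hij
  simp [hij]

end Matrix

open scoped ComplexOrder in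
theorem stmt_15 (n k : ℕ) (M : Fin k → Matrix (Fin n) (Fin n) ℂ)
    (T : Matrix (Fin n) (Fin n) ℂ →ₗ[ℂ] Matrix (Fin n) (Fin n) ℂ)
    (hT : ∀ ρ, T ρ = ∑ m, M m * ρ * (M m)ᴴ)
    (Tstar : Matrix (Fin n) (Fin n) ℂ →ₗ[ℂ] Matrix (Fin n) (Fin n) ℂ)
    (hTstar : ∀ A B, (Aᴴ * T B).trace = ((Tstar A)ᴴ * B).trace)
    (hsym : ∃ U : Matrix (Fin n) (Fin n) ℂ ≃ₗ[ℂ] Matrix (Fin n) (Fin n) ℂ,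
      ∀ ρ, U (Tstar (U.symm ρ)) = -(T ρ)) :
    ∀ m, (M m).trace = 0 := by
  obtain ⟨U, hU⟩ := hsym
  have hT_kraus : T = ∑ m, LinearMap.mulLeftRight ℂ (M m, (M m)ᴴ) :=
    LinearMap.ext fun ρ => by simp [hT]
  have hT_trace : LinearMap.trace ℂ _ T = ∑ m, (M m).trace * star (M m).trace := by
    simp [hT_kraus, linearMap_trace_mulLeftRight, trace_conjTranspose]
  have hT_nonneg : 0 ≤ LinearMap.trace ℂ _ T :=
    hT_trace ▸ Finset.sum_nonneg fun m _ => mul_star_self_nonneg _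
  have hTstar_trace : LinearMap.trace ℂ _ Tstar = -LinearMap.trace ℂ _ T := by
    rw [← LinearMap.trace_conj' Tstar U, ← map_neg]
    exact congrArg _ (LinearMap.ext hU)
  have hT_zero : LinearMap.trace ℂ _ T = 0 := by
    have h := linearMap_trace_eq_star_of_trace_conjTranspose_mul hTstar
    rw [hTstar_trace, (IsSelfAdjoint.of_nonneg hT_nonneg).star_eq] at h
    exact neg_eq_self.mp h
  intro m
  rw [hT_trace, Finset.sum_eq_zero_iff_of_nonneg fun m _ => mul_star_self_nonneg _] at hT_zero
  exact CStarRing.mul_star_self_eq_zero_iff _ |>.mp (hT_zero m (Finset.mem_univ m))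
end

section
/- For each positive natural number N, let θ = π/N and for i = 0, 1, …, N let u_i = (cos(iθ), sin(iθ)) ∈ ℝ², with P_i(x) = ⟨x, u_i⟩ u_i the orthogonal projection onto span{u_i}. Then the composition P_N ∘ ⋯ ∘ P_1 applied to u_0 equals −(cos(π/N))^N • u_0; that is, u_0 is mapped to a negative multiple of itself with factor −(cos(π/N))^N. -/
open Matrix

theorem stmt_18 (N : ℕ) (hN : 0 < N)
    (u : ℕ → Fin 2 → ℝ)
    (hu : ∀ i : ℕ, u i = ![Real.cos (i * (Real.pi / N)),
      Real.sin (i * (Real.pi / N))])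
    (v : ℕ → Fin 2 → ℝ)
    (hv0 : v 0 = u 0)
    (hv : ∀ i : ℕ, v (i + 1) = (v i ⬝ᵥ u (i + 1)) • u (i + 1)) :
    v N = (-(Real.cos (Real.pi / N) ^ N)) • u 0 := by
  set θ := Real.pi / N with hθ
  have hdot : ∀ i : ℕ, u i ⬝ᵥ u (i + 1) = Real.cos θ := by
    intro i
    have h : ((i : ℝ) + 1) * θ - i * θ = θ := by ring
    simp only [hu, Nat.cast_add, Nat.cast_one]
    rw [show (![Real.cos (i * θ), Real.sin (i * θ)] ⬝ᵥ
        ![Real.cos (((i : ℝ) + 1) * θ), Real.sin (((i : ℝ) + 1) * θ)]) =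
        Real.cos (i * θ) * Real.cos (((i : ℝ) + 1) * θ) +
        Real.sin (i * θ) * Real.sin (((i : ℝ) + 1) * θ) by
      simp [dotProduct, Fin.sum_univ_two]]
    rw [← Real.cos_sub]
    rw [show (i : ℝ) * θ - ((i : ℝ) + 1) * θ = -θ by ring, Real.cos_neg]
  have key : ∀ i : ℕ, v i = (Real.cos θ ^ i) • u i := by
    intro i
    induction i with
    | zero => simpa using hv0
    | succ n ih =>
      rw [hv n, ih]
      rw [smul_dotProduct, hdot n]
      rw [pow_succ]
      simp [smul_smul, mul_comm]
  have hNθ : (N : ℝ) * θ = Real.pi := by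
    rw [hθ]
    field_simp
  have huN : u N = (-1 : ℝ) • u 0 := by
    rw [hu N, hu 0, hNθ]
    simp [Real.cos_pi, Real.sin_pi]
  rw [key N, huN, smul_smul]
  ring_nf
end
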